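/- For functions f, g, h on Ω = M × (−1,1) with M = (0,L₁) × (0,L₂), the anisotropic tri-linear estimate holds: ∫_M (∫_{−1}^1 |f| dz)(∫_{−1}^1 |g h| dz) dxdy ≤ C ‖f‖_{L²}^{1/2}(‖f‖_{L²}^{1/2} + ‖∇_H f‖_{L²}^{1/2}) ‖h‖_{L²} ‖g‖_{L²}^{1/2}(‖g‖_{L²}^{1/2} + ‖∇_H g‖_{L²}^{1/2}), whenever the right-hand side is finite. -/

import Mathlib

open MeasureTheory Set

/-- squared L² norm over Ω = (0,L₁)×(0,L₂)×(−1,1) -/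
noncomputable def l2sq (L₁ L₂ : ℝ) (f : ℝ → ℝ → ℝ → ℝ) : ℝ :=
  ∫ x in Ioo (0:ℝ) L₁, ∫ y in Ioo (0:ℝ) L₂, ∫ z in Ioo (-1:ℝ) 1, (f x y z)^2

noncomputable def l2norm (L₁ L₂ : ℝ) (f : ℝ → ℝ → ℝ → ℝ) : ℝ :=
  Real.sqrt (l2sq L₁ L₂ f)

/-- L² norm of the horizontal gradient, given the partial derivatives fx, fy -/
noncomputable def gradHnorm (L₁ L₂ : ℝ) (fx fy : ℝ → ℝ → ℝ → ℝ) : ℝ :=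
  Real.sqrt (∫ x in Ioo (0:ℝ) L₁, ∫ y in Ioo (0:ℝ) L₂, ∫ z in Ioo (-1:ℝ) 1,
    ((fx x y z)^2 + (fy x y z)^2))



instance myFin (a b : ℝ) : IsFiniteMeasure (volume.restrict (Ioo a b)) := by
  constructor
  rw [Measure.restrict_apply_univ, Real.volume_Ioo]
  exact ENNReal.ofReal_lt_top

lemma integrable_of_bdd {α : Type*} [MeasurableSpace α] {μ : Measure α} [IsFiniteMeasure μ]
    {u : α → ℝ} (hm : AEStronglyMeasurable u μ) {C : ℝ} (h : ∀ᵐ a ∂μ, |u a| ≤ C) :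
    Integrable u μ :=
  Integrable.mono' (integrable_const C) hm (h.mono fun a ha => by simpa [Real.norm_eq_abs] using ha)

lemma cs_integral {α : Type*} [MeasurableSpace α] {μ : Measure α} {u v : α → ℝ}
    (hu : 0 ≤ᵐ[μ] u) (hv : 0 ≤ᵐ[μ] v)
    (hu2 : Integrable (fun a => (u a)^2) μ) (hv2 : Integrable (fun a => (v a)^2) μ)
    (huv : Integrable (fun a => u a * v a) μ) :
    ∫ a, u a * v a ∂μ ≤ Real.sqrt (∫ a, (u a)^2 ∂μ) * Real.sqrt (∫ a, (v a)^2 ∂μ) := by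
  set A := ∫ a, (u a)^2 ∂μ with hA
  set B := ∫ a, (v a)^2 ∂μ with hB
  have hA0 : 0 ≤ A := integral_nonneg fun a => sq_nonneg _
  have hB0 : 0 ≤ B := integral_nonneg fun a => sq_nonneg _
  have hzero : ∀ {w w' : α → ℝ}, (∫ a, (w a)^2 ∂μ) = 0 → Integrable (fun a => (w a)^2) μ →
      (∫ a, w a * w' a ∂μ ≤ Real.sqrt (∫ a, (w a)^2 ∂μ) * Real.sqrt (∫ a, (w' a)^2 ∂μ)) → True := fun _ _ _ => trivial
  rcases eq_or_lt_of_le hA0 with h0 | hApos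
  · have hsq : (fun a => (u a)^2) =ᵐ[μ] 0 :=
      (integral_eq_zero_iff_of_nonneg (fun a => sq_nonneg _) hu2).mp h0.symm
    have huv0 : (fun a => u a * v a) =ᵐ[μ] 0 := by
      filter_upwards [hsq] with a ha
      have : u a = 0 := by
        have h2 : (u a)^2 = 0 := by simpa using ha
        exact pow_eq_zero_iff (n := 2) (by norm_num) |>.mp h2
      simp [this]
    rw [integral_congr_ae huv0]
    simp only [Pi.zero_apply, integral_zero]
    positivity
  rcases eq_or_lt_of_le hB0 with h0 | hBpos
  · have hsq : (fun a => (v a)^2) =ᵐ[μ] 0 :=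
      (integral_eq_zero_iff_of_nonneg (fun a => sq_nonneg _) hv2).mp h0.symm
    have huv0 : (fun a => u a * v a) =ᵐ[μ] 0 := by
      filter_upwards [hsq] with a ha
      have : v a = 0 := by
        have h2 : (v a)^2 = 0 := by simpa using ha
        exact pow_eq_zero_iff (n := 2) (by norm_num) |>.mp h2
      simp [this]
    rw [integral_congr_ae huv0]
    simp only [Pi.zero_apply, integral_zero]
    positivity
  · have key : ∫ a, (Real.sqrt A * Real.sqrt B) * (u a * v a) ∂μ
        ≤ ∫ a, (B * (u a)^2 + A * (v a)^2)/2 ∂μ := by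
      apply integral_mono_ae (huv.const_mul _)
      · exact ((hu2.const_mul B).add (hv2.const_mul A)).div_const 2
      · filter_upwards [hu, hv] with a hua hva
        have h1 : 0 ≤ (Real.sqrt B * u a - Real.sqrt A * v a)^2 := sq_nonneg _
        have hBs : (Real.sqrt B)^2 = B := Real.sq_sqrt hB0
        have hAs : (Real.sqrt A)^2 = A := Real.sq_sqrt hA0
        nlinarith [Real.sqrt_nonneg A, Real.sqrt_nonneg B]
    rw [integral_const_mul] at key
    have hrhs : ∫ a, (B * (u a)^2 + A * (v a)^2)/2 ∂μ = A * B := by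
      rw [integral_div, integral_add (hu2.const_mul B) (hv2.const_mul A),
        integral_const_mul, integral_const_mul, ← hA, ← hB]
      ring
    rw [hrhs] at key
    have hABpos : 0 < Real.sqrt A * Real.sqrt B :=
      mul_pos (Real.sqrt_pos.mpr hApos) (Real.sqrt_pos.mpr hBpos)
    have heq : (Real.sqrt A * Real.sqrt B) * (Real.sqrt A * Real.sqrt B) = A * B := by
      have h1 := Real.mul_self_sqrt hA0
      have h2 := Real.mul_self_sqrt hB0
      nlinarith [Real.sqrt_nonneg A, Real.sqrt_nonneg B]
    exact le_of_mul_le_mul_left (key.trans_eq heq.symm) hABpos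


lemma contInt {X : Type*} [TopologicalSpace X] [FirstCountableTopology X] [LocallyCompactSpace X]
    {u : X → ℝ → ℝ} (hu : Continuous fun p : X × ℝ => u p.1 p.2) (a b : ℝ) :
    Continuous fun x => ∫ z in Ioo a b, u x z := by
  have h : (fun x => ∫ z in Ioo a b, u x z) = fun x => ∫ z in Icc a b, u x z := by
    funext x; exact (integral_Icc_eq_integral_Ioo).symm
  rw [h]
  exact continuous_parametric_integral_of_continuous hu isCompact_Icc

lemma intOn {u : ℝ → ℝ} (hu : Continuous u) (a b : ℝ) : IntegrableOn u (Ioo a b) volume :=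
  (hu.continuousOn.integrableOn_compact isCompact_Icc).mono_set Ioo_subset_Icc_self

lemma intProd2 {u : ℝ × ℝ → ℝ} (hu : Continuous u) (a b c d : ℝ) :
    Integrable u ((volume.restrict (Ioo a b)).prod (volume.restrict (Ioo c d))) := by
  rw [Measure.prod_restrict, ← Measure.volume_eq_prod]
  exact (hu.continuousOn.integrableOn_compact (isCompact_Icc.prod isCompact_Icc)).mono_set
    (prod_mono Ioo_subset_Icc_self Ioo_subset_Icc_self)

lemma intProd3 {u : ℝ × (ℝ × ℝ) → ℝ} (hu : Continuous u) (a b c d e e' : ℝ) :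
    Integrable u ((volume.restrict (Ioo a b)).prod
      ((volume.restrict (Ioo c d)).prod (volume.restrict (Ioo e e')))) := by
  rw [Measure.prod_restrict, Measure.prod_restrict, ← Measure.volume_eq_prod,
    ← Measure.volume_eq_prod]
  exact (hu.continuousOn.integrableOn_compact
      (isCompact_Icc.prod (isCompact_Icc.prod isCompact_Icc))).mono_set
    (prod_mono Ioo_subset_Icc_self (prod_mono Ioo_subset_Icc_self Ioo_subset_Icc_self))

lemma iter2 {u : ℝ → ℝ → ℝ} (hu : Continuous fun p : ℝ × ℝ => u p.1 p.2) (a b c d : ℝ) :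
    (∫ x in Ioo a b, ∫ y in Ioo c d, u x y)
      = ∫ p, u p.1 p.2 ∂((volume.restrict (Ioo a b)).prod (volume.restrict (Ioo c d))) :=
  integral_integral (intProd2 hu a b c d)

lemma swap2 {u : ℝ → ℝ → ℝ} (hu : Continuous fun p : ℝ × ℝ => u p.1 p.2) (a b c d : ℝ) :
    (∫ x in Ioo a b, ∫ y in Ioo c d, u x y) = ∫ y in Ioo c d, ∫ x in Ioo a b, u x y :=
  integral_integral_swap (intProd2 hu a b c d)


def Cont3 (f : ℝ → ℝ → ℝ → ℝ) : Prop :=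
  Continuous fun q : ℝ × ℝ × ℝ => f q.1 q.2.1 q.2.2


lemma Cont3.fix1 {u : ℝ → ℝ → ℝ → ℝ} (hu : Cont3 u) (x : ℝ) :
    Continuous fun p : ℝ × ℝ => u x p.1 p.2 :=
  hu.comp (continuous_const.prodMk continuous_id)

lemma iter3 {u : ℝ → ℝ → ℝ → ℝ} (hu : Cont3 u) (a b c d e e' : ℝ) :
    (∫ x in Ioo a b, ∫ y in Ioo c d, ∫ z in Ioo e e', u x y z)
      = ∫ p : ℝ × ℝ × ℝ, u p.1 p.2.1 p.2.2 ∂((volume.restrict (Ioo a b)).prod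
          ((volume.restrict (Ioo c d)).prod (volume.restrict (Ioo e e')))) := by
  have h1 : ∀ x, (∫ y in Ioo c d, ∫ z in Ioo e e', u x y z)
      = ∫ q : ℝ × ℝ, u x q.1 q.2 ∂((volume.restrict (Ioo c d)).prod (volume.restrict (Ioo e e'))) :=
    fun x => iter2 (hu.fix1 x) c d e e'
  simp_rw [h1]
  exact integral_integral (intProd3 hu a b c d e e')

lemma Cont3.fix2 {u : ℝ → ℝ → ℝ → ℝ} (hu : Cont3 u) (y : ℝ) :
    Continuous fun p : ℝ × ℝ => u p.1 y p.2 :=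
  hu.comp (continuous_fst.prodMk (continuous_const.prodMk continuous_snd))

lemma Cont3.pair {u : ℝ → ℝ → ℝ → ℝ} (hu : Cont3 u) :
    Continuous fun q : (ℝ × ℝ) × ℝ => u q.1.1 q.1.2 q.2 :=
  hu.comp ((continuous_fst.comp continuous_fst).prodMk
    ((continuous_snd.comp continuous_fst).prodMk continuous_snd))

lemma Cont3.pairSwap {u : ℝ → ℝ → ℝ → ℝ} (hu : Cont3 u) :
    Continuous fun q : (ℝ × ℝ) × ℝ => u q.1.2 q.1.1 q.2 :=
  hu.comp ((continuous_snd.comp continuous_fst).prodMk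
    ((continuous_fst.comp continuous_fst).prodMk continuous_snd))

lemma Cont3.c3 {u : ℝ → ℝ → ℝ → ℝ} (hu : Cont3 u) (x y : ℝ) :
    Continuous fun z => u x y z :=
  hu.comp (continuous_const.prodMk (continuous_const.prodMk continuous_id))

-- key_bound
lemma key_bound {L : ℝ} (hL : 0 < L) {u du : ℝ → ℝ → ℝ}
    (hd : ∀ x z, HasDerivAt (fun t => u t z) (du x z) x)
    (hu : Continuous fun p : ℝ × ℝ => u p.1 p.2)
    (hdu : Continuous fun p : ℝ × ℝ => du p.1 p.2)
    {x : ℝ} (hx : x ∈ Ioo 0 L) :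
    (∫ z in Ioo (-1:ℝ) 1, (u x z)^2)
      ≤ (1/L) * (∫ s in Ioo 0 L, ∫ z in Ioo (-1:ℝ) 1, (u s z)^2)
        + (∫ s in Ioo 0 L, ∫ z in Ioo (-1:ℝ) 1, 2 * |u s z| * |du s z|) := by
  -- continuity facts
  have cA : Continuous fun p : ℝ × ℝ => 2 * |u p.1 p.2| * |du p.1 p.2| :=
    ((continuous_const.mul hu.abs).mul hdu.abs)
  have cAswap : Continuous fun p : ℝ × ℝ => 2 * |u p.2 p.1| * |du p.2 p.1| :=
    cA.comp continuous_swap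
  have cu2 : Continuous fun p : ℝ × ℝ => (u p.1 p.2)^2 := hu.pow 2
  -- inner integral in s, as a function of z
  set J : ℝ → ℝ := fun z => ∫ s in Ioo 0 L, 2 * |u s z| * |du s z| with hJ
  have cJ : Continuous J := by
    have := contInt (u := fun z s => 2 * |u s z| * |du s z|) (by exact cAswap.comp (continuous_id)) 0 L
    exact this
  set Wu : ℝ → ℝ := fun t => ∫ z in Ioo (-1:ℝ) 1, (u t z)^2 with hWu
  have cWu : Continuous Wu := contInt cu2 (-1) 1
  set Du : ℝ := ∫ s in Ioo 0 L, ∫ z in Ioo (-1:ℝ) 1, 2 * |u s z| * |du s z| with hDu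
  -- swap: ∫ z, J z = Du
  have hswap : (∫ z in Ioo (-1:ℝ) 1, J z) = Du := by
    rw [hDu]
    exact (swap2 cA 0 L (-1) 1).symm
  -- step 3a: pointwise FTC bound
  have h3a : ∀ x₀ ∈ Ioo 0 L, ∀ z : ℝ, (u x z)^2 ≤ (u x₀ z)^2 + J z := by
    intro x₀ hx₀ z
    have hd2 : ∀ t, HasDerivAt (fun t => (u t z)^2) (2 * u t z * du t z) t := by
      intro t
      have := (hd t z).fun_pow 2
      simpa [mul_comm, mul_assoc, mul_left_comm] using this
    have hcont : Continuous fun t => 2 * u t z * du t z := by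
      have h1 : Continuous fun t => u t z := hu.comp (continuous_id.prodMk continuous_const)
      have h2 : Continuous fun t => du t z := hdu.comp (continuous_id.prodMk continuous_const)
      exact (continuous_const.mul h1).mul h2
    have hftc : ∫ s in x₀..x, 2 * u s z * du s z = (u x z)^2 - (u x₀ z)^2 :=
      intervalIntegral.integral_eq_sub_of_hasDerivAt (fun t _ => hd2 t)
        (hcont.intervalIntegrable x₀ x)
    have hb1 : |(u x z)^2 - (u x₀ z)^2| ≤ ∫ s in Set.uIoc x₀ x, 2 * |u s z| * |du s z| := by
      rw [← hftc]
      simpa [Real.norm_eq_abs, abs_mul] using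
        intervalIntegral.norm_integral_le_integral_norm_uIoc (f := fun s => 2 * u s z * du s z)
          (a := x₀) (b := x) (μ := volume)
    have hsub : Set.uIoc x₀ x ⊆ Ioo 0 L := by
      intro t ht
      rcases ht with ⟨ht1, ht2⟩
      constructor
      · exact lt_of_lt_of_le (lt_min hx₀.1 hx.1) (le_of_lt ht1) |>.trans_le le_rfl
      · exact lt_of_le_of_lt ht2 (max_lt hx₀.2 hx.2)
    have hb2 : (∫ s in Set.uIoc x₀ x, 2 * |u s z| * |du s z|) ≤ J z := by
      rw [hJ]
      have hint : IntegrableOn (fun s => 2 * |u s z| * |du s z|) (Ioo 0 L) volume := by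
        apply intOn
        exact (continuous_const.mul (hu.comp (continuous_id.prodMk continuous_const)).abs).mul
          (hdu.comp (continuous_id.prodMk continuous_const)).abs
      exact setIntegral_mono_set hint
        (Filter.Eventually.of_forall fun s => by positivity) hsub.eventuallyLE
    have hfin := abs_le.mp (hb1.trans hb2)
    linarith [hfin.2]
  -- step 3b: integrate over z
  have h3b : ∀ x₀ ∈ Ioo 0 L, Wu x ≤ Wu x₀ + Du := by
    intro x₀ hx₀
    have hint1 : IntegrableOn (fun z => (u x z)^2) (Ioo (-1:ℝ) 1) volume :=
      intOn ((hu.comp (continuous_const.prodMk continuous_id)).pow 2) _ _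
    have hint2 : IntegrableOn (fun z => (u x₀ z)^2 + J z) (Ioo (-1:ℝ) 1) volume :=
      intOn (((hu.comp (continuous_const.prodMk continuous_id)).pow 2).add cJ) _ _
    have h1 : Wu x ≤ ∫ z in Ioo (-1:ℝ) 1, ((u x₀ z)^2 + J z) :=
      setIntegral_mono_on hint1 hint2 measurableSet_Ioo (fun z _ => h3a x₀ hx₀ z)
    have h2 : (∫ z in Ioo (-1:ℝ) 1, ((u x₀ z)^2 + J z))
        = Wu x₀ + ∫ z in Ioo (-1:ℝ) 1, J z := by
      exact integral_add (intOn ((hu.comp (continuous_const.prodMk continuous_id)).pow 2) _ _)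
        (intOn cJ _ _)
    rw [h2, hswap] at h1
    exact h1
  -- step 3d: average over x₀
  have hIint : IntegrableOn Wu (Ioo 0 L) volume := intOn cWu 0 L
  set I : ℝ := ∫ s in Ioo 0 L, Wu s with hI
  have havg : L * (Wu x - Du) ≤ I := by
    have h1 : (∫ _ in Ioo 0 L, (Wu x - Du)) ≤ I :=
      setIntegral_mono_on (integrableOn_const (by rw [Real.volume_Ioo]; exact ENNReal.ofReal_ne_top)) hIint measurableSet_Ioo
        (fun x₀ hx₀ => by linarith [h3b x₀ hx₀])
    rw [setIntegral_const, measureReal_def, Real.volume_Ioo, smul_eq_mul] at h1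
    rw [ENNReal.toReal_ofReal (by linarith)] at h1
    simpa using h1
  have hfin : Wu x - Du ≤ I / L := (le_div_iff₀ hL).mpr (by linarith [mul_comm L (Wu x - Du)])
  have : (1/L) * I = I / L := by ring
  have goal : Wu x ≤ (1/L) * I + Du := by rw [this]; linarith
  exact goal

lemma sqrt_add_le {a b : ℝ} (ha : 0 ≤ a) (hb : 0 ≤ b) :
    Real.sqrt (a + b) ≤ Real.sqrt a + Real.sqrt b := by
  have h1 : a + b ≤ (Real.sqrt a + Real.sqrt b)^2 := by
    have := Real.sq_sqrt ha; have := Real.sq_sqrt hb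
    nlinarith [Real.sqrt_nonneg a, Real.sqrt_nonneg b]
  calc Real.sqrt (a + b) ≤ Real.sqrt ((Real.sqrt a + Real.sqrt b)^2) := Real.sqrt_le_sqrt h1
    _ = Real.sqrt a + Real.sqrt b := Real.sqrt_sq (by positivity)

set_option maxHeartbeats 2000000 in
/-- the anisotropic tri-linear estimate, first form. -/
theorem trilinear_estimate_first_form (L₁ L₂ : ℝ) (hL₁ : 0 < L₁) (hL₂ : 0 < L₂) :
    ∃ C > 0, ∀ f fx fy g gx gy h : ℝ → ℝ → ℝ → ℝ,
      (∀ x y z, HasDerivAt (fun t => f t y z) (fx x y z) x) →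
      (∀ x y z, HasDerivAt (fun t => f x t z) (fy x y z) y) →
      (∀ x y z, HasDerivAt (fun t => g t y z) (gx x y z) x) →
      (∀ x y z, HasDerivAt (fun t => g x t z) (gy x y z) y) →
      Cont3 f → Cont3 fx → Cont3 fy → Cont3 g → Cont3 gx → Cont3 gy → Cont3 h →
      (∫ x in Ioo (0:ℝ) L₁, ∫ y in Ioo (0:ℝ) L₂,
          (∫ z in Ioo (-1:ℝ) 1, |f x y z|) * (∫ z in Ioo (-1:ℝ) 1, |g x y z * h x y z|))
        ≤ C * Real.sqrt (l2norm L₁ L₂ f) *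
            (Real.sqrt (l2norm L₁ L₂ f) + Real.sqrt (gradHnorm L₁ L₂ fx fy)) *
            l2norm L₁ L₂ h *
            Real.sqrt (l2norm L₁ L₂ g) *
            (Real.sqrt (l2norm L₁ L₂ g) + Real.sqrt (gradHnorm L₁ L₂ gx gy)) := by
  set c₁ : ℝ := Real.sqrt (1/L₁) + Real.sqrt 2 with hc₁
  set c₂ : ℝ := Real.sqrt (1/L₂) + Real.sqrt 2 with hc₂
  have hc₁0 : 0 < c₁ := by
    have : 0 < Real.sqrt (1/L₁) := Real.sqrt_pos.mpr (by positivity)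
    positivity
  have hc₂0 : 0 < c₂ := by
    have : 0 < Real.sqrt (1/L₂) := Real.sqrt_pos.mpr (by positivity)
    positivity
  refine ⟨Real.sqrt 2 * c₁ * c₂, by positivity, ?_⟩
  intro f fx fy g gx gy h hfx hfy hgx hgy cf cfx cfy cg cgx cgy ch
  -- abbreviations
  set W : ℝ → ℝ → ℝ := fun x y => ∫ z in Ioo (-1:ℝ) 1, (f x y z)^2 with hW
  set V : ℝ → ℝ → ℝ := fun x y => ∫ z in Ioo (-1:ℝ) 1, (g x y z)^2 with hV
  set Hh : ℝ → ℝ → ℝ := fun x y => ∫ z in Ioo (-1:ℝ) 1, (h x y z)^2 with hHh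
  set Df : ℝ → ℝ := fun y => ∫ s in Ioo (0:ℝ) L₁, ∫ z in Ioo (-1:ℝ) 1,
    2 * |f s y z| * |fx s y z| with hDf
  set Dg : ℝ → ℝ := fun x => ∫ t in Ioo (0:ℝ) L₂, ∫ z in Ioo (-1:ℝ) 1,
    2 * |g x t z| * |gy x t z| with hDg
  set P : ℝ → ℝ := fun y => (1/L₁) * (∫ s in Ioo (0:ℝ) L₁, W s y) + Df y with hP
  set Q : ℝ → ℝ := fun x => (1/L₂) * (∫ t in Ioo (0:ℝ) L₂, V x t) + Dg x with hQ
  -- continuity facts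
  have cW2 : Continuous fun p : ℝ × ℝ => W p.1 p.2 := contInt (cf.pair.pow 2) (-1) 1
  have cV2 : Continuous fun p : ℝ × ℝ => V p.1 p.2 := contInt (cg.pair.pow 2) (-1) 1
  have cH2 : Continuous fun p : ℝ × ℝ => Hh p.1 p.2 := contInt (ch.pair.pow 2) (-1) 1
  have cDf : Continuous Df := by
    have cK : Continuous fun p : ℝ × ℝ => ∫ z in Ioo (-1:ℝ) 1, 2 * |f p.2 p.1 z| * |fx p.2 p.1 z| :=
      contInt ((continuous_const.mul cf.pairSwap.abs).mul cfx.pairSwap.abs) (-1) 1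
    exact contInt cK 0 L₁
  have cDg : Continuous Dg := by
    have cK : Continuous fun p : ℝ × ℝ => ∫ z in Ioo (-1:ℝ) 1, 2 * |g p.1 p.2 z| * |gy p.1 p.2 z| :=
      contInt ((continuous_const.mul cg.pair.abs).mul cgy.pair.abs) (-1) 1
    exact contInt cK 0 L₂
  have cP : Continuous P := by
    have c1 : Continuous fun y => ∫ s in Ioo (0:ℝ) L₁, W s y :=
      contInt (u := fun y s => W s y) (cW2.comp continuous_swap) 0 L₁
    exact (continuous_const.mul c1).add cDf
  have cQ : Continuous Q := by
    have c1 : Continuous fun x => ∫ t in Ioo (0:ℝ) L₂, V x t := contInt cV2 0 L₂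
    exact (continuous_const.mul c1).add cDg
  -- nonnegativity
  have hW0 : ∀ x y, 0 ≤ W x y := fun x y => integral_nonneg fun z => sq_nonneg _
  have hV0 : ∀ x y, 0 ≤ V x y := fun x y => integral_nonneg fun z => sq_nonneg _
  have hH0 : ∀ x y, 0 ≤ Hh x y := fun x y => integral_nonneg fun z => sq_nonneg _
  have hDf0 : ∀ y, 0 ≤ Df y :=
    fun y => integral_nonneg fun s => integral_nonneg fun z => by positivity
  have hDg0 : ∀ x, 0 ≤ Dg x :=
    fun x => integral_nonneg fun t => integral_nonneg fun z => by positivity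
  have hP0 : ∀ y, 0 ≤ P y := fun y =>
    add_nonneg (mul_nonneg (by positivity) (integral_nonneg fun s => hW0 s y)) (hDf0 y)
  have hQ0 : ∀ x, 0 ≤ Q x := fun x =>
    add_nonneg (mul_nonneg (by positivity) (integral_nonneg fun t => hV0 x t)) (hDg0 x)
  -- key sup bounds
  have hWP : ∀ y : ℝ, ∀ x ∈ Ioo (0:ℝ) L₁, W x y ≤ P y := by
    intro y x hx
    exact key_bound hL₁ (u := fun t z => f t y z) (du := fun t z => fx t y z)
      (fun x z => hfx x y z) (cf.fix2 y) (cfx.fix2 y) hx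
  have hVQ : ∀ x : ℝ, ∀ y ∈ Ioo (0:ℝ) L₂, V x y ≤ Q x := by
    intro x y hy
    exact key_bound hL₂ (u := fun t z => g x t z) (du := fun t z => gy x t z)
      (fun y z => hgy x y z) (cg.fix1 x) (cgy.fix1 x) hy
  -- z-direction Cauchy–Schwarz
  have vol3 : (volume (Ioo (-1:ℝ) 1)).toReal = 2 := by
    rw [Real.volume_Ioo]; rw [ENNReal.toReal_ofReal (by norm_num)]; norm_num
  have hF2 : ∀ x y, (∫ z in Ioo (-1:ℝ) 1, |f x y z|) ≤ Real.sqrt 2 * Real.sqrt (W x y) := by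
    intro x y
    have hcs := cs_integral (μ := volume.restrict (Ioo (-1:ℝ) 1))
      (u := fun z => |f x y z|) (v := fun _ => (1:ℝ))
      (Filter.Eventually.of_forall fun z => abs_nonneg _)
      (Filter.Eventually.of_forall fun z => zero_le_one)
      (intOn (((cf.c3 x y).abs).pow 2) (-1) 1)
      (intOn continuous_const (-1) 1)
      (intOn ((cf.c3 x y).abs.mul continuous_const) (-1) 1)
    have e1 : (∫ z in Ioo (-1:ℝ) 1, |f x y z| * 1) = ∫ z in Ioo (-1:ℝ) 1, |f x y z| := by
      simp
    have e2 : (∫ z in Ioo (-1:ℝ) 1, |f x y z| ^ 2) = W x y := by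
      rw [hW]; simp [sq_abs]
    have e3 : (∫ _ in Ioo (-1:ℝ) 1, ((1:ℝ)) ^ 2) = 2 := by
      simp only [one_pow]
      rw [setIntegral_const, measureReal_def, vol3, smul_eq_mul, mul_one]
    rw [e1, e2, e3] at hcs
    calc (∫ z in Ioo (-1:ℝ) 1, |f x y z|) ≤ Real.sqrt (W x y) * Real.sqrt 2 := hcs
      _ = Real.sqrt 2 * Real.sqrt (W x y) := mul_comm _ _
  have hGH : ∀ x y, (∫ z in Ioo (-1:ℝ) 1, |g x y z * h x y z|)
      ≤ Real.sqrt (V x y) * Real.sqrt (Hh x y) := by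
    intro x y
    have hcs := cs_integral (μ := volume.restrict (Ioo (-1:ℝ) 1))
      (u := fun z => |g x y z|) (v := fun z => |h x y z|)
      (Filter.Eventually.of_forall fun z => abs_nonneg _)
      (Filter.Eventually.of_forall fun z => abs_nonneg _)
      (intOn (((cg.c3 x y).abs).pow 2) (-1) 1)
      (intOn (((ch.c3 x y).abs).pow 2) (-1) 1)
      (intOn ((cg.c3 x y).abs.mul (ch.c3 x y).abs) (-1) 1)
    have e1 : (∫ z in Ioo (-1:ℝ) 1, |g x y z * h x y z|)
        = ∫ z in Ioo (-1:ℝ) 1, |g x y z| * |h x y z| := by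
      simp_rw [abs_mul]
    have e2 : (∫ z in Ioo (-1:ℝ) 1, |g x y z| ^ 2) = V x y := by rw [hV]; simp [sq_abs]
    have e3 : (∫ z in Ioo (-1:ℝ) 1, |h x y z| ^ 2) = Hh x y := by rw [hHh]; simp [sq_abs]
    rw [e2, e3] at hcs
    rw [e1]
    exact hcs
  -- pointwise product bound
  have hpt : ∀ x ∈ Ioo (0:ℝ) L₁, ∀ y ∈ Ioo (0:ℝ) L₂,
      (∫ z in Ioo (-1:ℝ) 1, |f x y z|) * (∫ z in Ioo (-1:ℝ) 1, |g x y z * h x y z|)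
        ≤ Real.sqrt 2 * ((Real.sqrt (P y) * Real.sqrt (Q x)) * Real.sqrt (Hh x y)) := by
    intro x hx y hy
    have h3 : (∫ z in Ioo (-1:ℝ) 1, |f x y z|) * (∫ z in Ioo (-1:ℝ) 1, |g x y z * h x y z|)
        ≤ (Real.sqrt 2 * Real.sqrt (W x y)) * (Real.sqrt (V x y) * Real.sqrt (Hh x y)) :=
      mul_le_mul (hF2 x y) (hGH x y) (integral_nonneg fun z => abs_nonneg _) (by positivity)
    have h4 : Real.sqrt (W x y) ≤ Real.sqrt (P y) := Real.sqrt_le_sqrt (hWP y x hx)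
    have h5 : Real.sqrt (V x y) ≤ Real.sqrt (Q x) := Real.sqrt_le_sqrt (hVQ x y hy)
    calc (∫ z in Ioo (-1:ℝ) 1, |f x y z|) * (∫ z in Ioo (-1:ℝ) 1, |g x y z * h x y z|)
        ≤ (Real.sqrt 2 * Real.sqrt (W x y)) * (Real.sqrt (V x y) * Real.sqrt (Hh x y)) := h3
      _ ≤ (Real.sqrt 2 * Real.sqrt (P y)) * (Real.sqrt (Q x) * Real.sqrt (Hh x y)) := by
          apply mul_le_mul
          · exact mul_le_mul_of_nonneg_left h4 (Real.sqrt_nonneg 2)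
          · exact mul_le_mul_of_nonneg_right h5 (Real.sqrt_nonneg _)
          · positivity
          · positivity
      _ = Real.sqrt 2 * ((Real.sqrt (P y) * Real.sqrt (Q x)) * Real.sqrt (Hh x y)) := by ring
  -- continuity of the two M-integrands
  have cFG : Continuous fun p : ℝ × ℝ =>
      (∫ z in Ioo (-1:ℝ) 1, |f p.1 p.2 z|) * (∫ z in Ioo (-1:ℝ) 1, |g p.1 p.2 z * h p.1 p.2 z|) :=
    (contInt cf.pair.abs (-1) 1).mul (contInt ((cg.pair.mul ch.pair).abs) (-1) 1)
  have cRHS : Continuous fun p : ℝ × ℝ =>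
      Real.sqrt 2 * ((Real.sqrt (P p.2) * Real.sqrt (Q p.1)) * Real.sqrt (Hh p.1 p.2)) :=
    continuous_const.mul
      (((Real.continuous_sqrt.comp (cP.comp continuous_snd)).mul
        (Real.continuous_sqrt.comp (cQ.comp continuous_fst))).mul
        (Real.continuous_sqrt.comp cH2))
  -- Step B : integrate the pointwise bound over M
  have stepB : (∫ x in Ioo (0:ℝ) L₁, ∫ y in Ioo (0:ℝ) L₂,
        (∫ z in Ioo (-1:ℝ) 1, |f x y z|) * (∫ z in Ioo (-1:ℝ) 1, |g x y z * h x y z|))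
      ≤ ∫ x in Ioo (0:ℝ) L₁, ∫ y in Ioo (0:ℝ) L₂,
          Real.sqrt 2 * ((Real.sqrt (P y) * Real.sqrt (Q x)) * Real.sqrt (Hh x y)) := by
    apply setIntegral_mono_on
    · exact intOn (contInt (u := fun x y => (∫ z in Ioo (-1:ℝ) 1, |f x y z|) *
        (∫ z in Ioo (-1:ℝ) 1, |g x y z * h x y z|)) cFG 0 L₂) 0 L₁
    · exact intOn (contInt (u := fun x y =>
        Real.sqrt 2 * ((Real.sqrt (P y) * Real.sqrt (Q x)) * Real.sqrt (Hh x y))) cRHS 0 L₂) 0 L₁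
    · exact measurableSet_Ioo
    · intro x hx
      apply setIntegral_mono_on
      · exact intOn (cFG.comp (continuous_const.prodMk continuous_id)) 0 L₂
      · exact intOn (cRHS.comp (continuous_const.prodMk continuous_id)) 0 L₂
      · exact measurableSet_Ioo
      · intro y hy
        exact hpt x hx y hy
  -- Step C : Cauchy–Schwarz on M
  set SP : ℝ := ∫ y in Ioo (0:ℝ) L₂, P y with hSP
  set SQ : ℝ := ∫ x in Ioo (0:ℝ) L₁, Q x with hSQ
  have hSP0 : 0 ≤ SP := integral_nonneg fun y => hP0 y
  have hSQ0 : 0 ≤ SQ := integral_nonneg fun x => hQ0 x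
  have stepC : (∫ x in Ioo (0:ℝ) L₁, ∫ y in Ioo (0:ℝ) L₂,
        Real.sqrt 2 * ((Real.sqrt (P y) * Real.sqrt (Q x)) * Real.sqrt (Hh x y)))
      ≤ Real.sqrt 2 * ((Real.sqrt SP * Real.sqrt SQ) * l2norm L₁ L₂ h) := by
    have hpull : (∫ x in Ioo (0:ℝ) L₁, ∫ y in Ioo (0:ℝ) L₂,
          Real.sqrt 2 * ((Real.sqrt (P y) * Real.sqrt (Q x)) * Real.sqrt (Hh x y)))
        = Real.sqrt 2 * ∫ x in Ioo (0:ℝ) L₁, ∫ y in Ioo (0:ℝ) L₂,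
            ((Real.sqrt (P y) * Real.sqrt (Q x)) * Real.sqrt (Hh x y)) := by
      simp_rw [integral_const_mul]
    rw [hpull]
    have cmain : Continuous fun p : ℝ × ℝ =>
        (Real.sqrt (P p.2) * Real.sqrt (Q p.1)) * Real.sqrt (Hh p.1 p.2) :=
      ((Real.continuous_sqrt.comp (cP.comp continuous_snd)).mul
        (Real.continuous_sqrt.comp (cQ.comp continuous_fst))).mul
        (Real.continuous_sqrt.comp cH2)
    have hiter : (∫ x in Ioo (0:ℝ) L₁, ∫ y in Ioo (0:ℝ) L₂,
          ((Real.sqrt (P y) * Real.sqrt (Q x)) * Real.sqrt (Hh x y)))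
        = ∫ p : ℝ × ℝ, (Real.sqrt (P p.2) * Real.sqrt (Q p.1)) * Real.sqrt (Hh p.1 p.2)
            ∂((volume.restrict (Ioo (0:ℝ) L₁)).prod (volume.restrict (Ioo (0:ℝ) L₂))) :=
      iter2 (u := fun x y => (Real.sqrt (P y) * Real.sqrt (Q x)) * Real.sqrt (Hh x y))
        cmain 0 L₁ 0 L₂
    rw [hiter]
    have hcs := cs_integral
      (μ := (volume.restrict (Ioo (0:ℝ) L₁)).prod (volume.restrict (Ioo (0:ℝ) L₂)))
      (u := fun p => Real.sqrt (P p.2) * Real.sqrt (Q p.1))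
      (v := fun p => Real.sqrt (Hh p.1 p.2))
      (Filter.Eventually.of_forall fun p => by positivity)
      (Filter.Eventually.of_forall fun p => Real.sqrt_nonneg _)
      (intProd2 (((Real.continuous_sqrt.comp (cP.comp continuous_snd)).mul
        (Real.continuous_sqrt.comp (cQ.comp continuous_fst))).pow 2) 0 L₁ 0 L₂)
      (intProd2 ((Real.continuous_sqrt.comp cH2).pow 2) 0 L₁ 0 L₂)
      (intProd2 cmain 0 L₁ 0 L₂)
    have e4 : (∫ p : ℝ × ℝ, (Real.sqrt (P p.2) * Real.sqrt (Q p.1)) ^ 2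
          ∂((volume.restrict (Ioo (0:ℝ) L₁)).prod (volume.restrict (Ioo (0:ℝ) L₂)))) = SP * SQ := by
      have e4a : (∫ p : ℝ × ℝ, (Real.sqrt (P p.2) * Real.sqrt (Q p.1)) ^ 2
            ∂((volume.restrict (Ioo (0:ℝ) L₁)).prod (volume.restrict (Ioo (0:ℝ) L₂))))
          = ∫ p : ℝ × ℝ, P p.2 * Q p.1
            ∂((volume.restrict (Ioo (0:ℝ) L₁)).prod (volume.restrict (Ioo (0:ℝ) L₂))) := by
        apply integral_congr_ae
        apply Filter.Eventually.of_forall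
        intro p
        show (Real.sqrt (P p.2) * Real.sqrt (Q p.1)) ^ 2 = P p.2 * Q p.1
        rw [mul_pow, Real.sq_sqrt (hP0 _), Real.sq_sqrt (hQ0 _)]
      rw [e4a, ← iter2 (u := fun x y => P y * Q x)
        ((cP.comp continuous_snd).mul (cQ.comp continuous_fst)) 0 L₁ 0 L₂]
      simp_rw [integral_mul_const, integral_const_mul]
      rfl
    have e5 : (∫ p : ℝ × ℝ, (Real.sqrt (Hh p.1 p.2)) ^ 2
          ∂((volume.restrict (Ioo (0:ℝ) L₁)).prod (volume.restrict (Ioo (0:ℝ) L₂))))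
        = l2sq L₁ L₂ h := by
      have e5a : (∫ p : ℝ × ℝ, (Real.sqrt (Hh p.1 p.2)) ^ 2
            ∂((volume.restrict (Ioo (0:ℝ) L₁)).prod (volume.restrict (Ioo (0:ℝ) L₂))))
          = ∫ p : ℝ × ℝ, Hh p.1 p.2
            ∂((volume.restrict (Ioo (0:ℝ) L₁)).prod (volume.restrict (Ioo (0:ℝ) L₂))) := by
        apply integral_congr_ae
        apply Filter.Eventually.of_forall
        intro p
        show (Real.sqrt (Hh p.1 p.2)) ^ 2 = Hh p.1 p.2
        rw [Real.sq_sqrt (hH0 _ _)]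
      rw [e5a, ← iter2 (u := fun x y => Hh x y) cH2 0 L₁ 0 L₂]
      simp only [hHh, l2sq]
    rw [e4, e5] at hcs
    have hfin : Real.sqrt (SP * SQ) * Real.sqrt (l2sq L₁ L₂ h)
        = (Real.sqrt SP * Real.sqrt SQ) * l2norm L₁ L₂ h := by
      rw [Real.sqrt_mul hSP0, l2norm]
    rw [hfin] at hcs
    exact mul_le_mul_of_nonneg_left hcs (Real.sqrt_nonneg 2)
  -- Step D : bound SP
  set Pi3 : Measure (ℝ × ℝ × ℝ) := (volume.restrict (Ioo (0:ℝ) L₁)).prod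
    ((volume.restrict (Ioo (0:ℝ) L₂)).prod (volume.restrict (Ioo (-1:ℝ) 1))) with hPi3
  have stepD : SP ≤ (1/L₁) * l2sq L₁ L₂ f
      + 2 * (l2norm L₁ L₂ f * gradHnorm L₁ L₂ fx fy) := by
    have hsplit : SP = (1/L₁) * (∫ y in Ioo (0:ℝ) L₂, ∫ s in Ioo (0:ℝ) L₁, W s y)
        + ∫ y in Ioo (0:ℝ) L₂, Df y := by
      rw [hSP]
      simp only [hP]
      rw [integral_add ((intOn (contInt (u := fun y s => W s y)
        (cW2.comp continuous_swap) 0 L₁) 0 L₂).const_mul _) (intOn cDf 0 L₂)]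
      rw [integral_const_mul]
    have hD1 : (∫ y in Ioo (0:ℝ) L₂, ∫ s in Ioo (0:ℝ) L₁, W s y) = l2sq L₁ L₂ f := by
      rw [← swap2 (u := fun x y => W x y) cW2 0 L₁ 0 L₂]
      simp only [hW, l2sq]
    have cK2 : Continuous fun p : ℝ × ℝ =>
        ∫ z in Ioo (-1:ℝ) 1, 2 * |f p.1 p.2 z| * |fx p.1 p.2 z| :=
      contInt (u := fun p : ℝ × ℝ => fun z => 2 * |f p.1 p.2 z| * |fx p.1 p.2 z|)
        ((continuous_const.mul cf.pair.abs).mul cfx.pair.abs) (-1) 1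
    have hD2 : (∫ y in Ioo (0:ℝ) L₂, Df y)
        ≤ 2 * (l2norm L₁ L₂ f * gradHnorm L₁ L₂ fx fy) := by
      have hswapDf : (∫ y in Ioo (0:ℝ) L₂, Df y)
          = ∫ s in Ioo (0:ℝ) L₁, ∫ y in Ioo (0:ℝ) L₂, ∫ z in Ioo (-1:ℝ) 1,
              2 * |f s y z| * |fx s y z| := by
        simp only [hDf]
        exact (swap2 (u := fun s y => ∫ z in Ioo (-1:ℝ) 1, 2 * |f s y z| * |fx s y z|)
          cK2 0 L₁ 0 L₂).symm
      have hiter3 : (∫ s in Ioo (0:ℝ) L₁, ∫ y in Ioo (0:ℝ) L₂, ∫ z in Ioo (-1:ℝ) 1,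
              2 * |f s y z| * |fx s y z|)
          = ∫ p : ℝ × ℝ × ℝ, 2 * |f p.1 p.2.1 p.2.2| * |fx p.1 p.2.1 p.2.2| ∂Pi3 := by
        rw [hPi3]
        exact iter3 (u := fun x y z => 2 * |f x y z| * |fx x y z|)
          (by exact (continuous_const.mul cf.abs).mul cfx.abs) 0 L₁ 0 L₂ (-1) 1
      have h8 : (∫ p : ℝ × ℝ × ℝ, 2 * |f p.1 p.2.1 p.2.2| * |fx p.1 p.2.1 p.2.2| ∂Pi3)
          = 2 * ∫ p : ℝ × ℝ × ℝ, |f p.1 p.2.1 p.2.2| * |fx p.1 p.2.1 p.2.2| ∂Pi3 := by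
        simp_rw [mul_assoc]
        rw [integral_const_mul]
      have hi1 : Integrable (fun p : ℝ × ℝ × ℝ => |f p.1 p.2.1 p.2.2| ^ 2) Pi3 := by
        rw [hPi3]
        exact intProd3 (u := fun p : ℝ × (ℝ × ℝ) => |f p.1 p.2.1 p.2.2| ^ 2)
          (cf.abs.pow 2) 0 L₁ 0 L₂ (-1) 1
      have hi2 : Integrable (fun p : ℝ × ℝ × ℝ => |fx p.1 p.2.1 p.2.2| ^ 2) Pi3 := by
        rw [hPi3]
        exact intProd3 (u := fun p : ℝ × (ℝ × ℝ) => |fx p.1 p.2.1 p.2.2| ^ 2)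
          (cfx.abs.pow 2) 0 L₁ 0 L₂ (-1) 1
      have hi3 : Integrable (fun p : ℝ × ℝ × ℝ => |f p.1 p.2.1 p.2.2| * |fx p.1 p.2.1 p.2.2|) Pi3 := by
        rw [hPi3]
        exact intProd3 (u := fun p : ℝ × (ℝ × ℝ) => |f p.1 p.2.1 p.2.2| * |fx p.1 p.2.1 p.2.2|)
          (cf.abs.mul cfx.abs) 0 L₁ 0 L₂ (-1) 1
      have hcs3 := cs_integral (μ := Pi3)
        (u := fun p : ℝ × ℝ × ℝ => |f p.1 p.2.1 p.2.2|)
        (v := fun p : ℝ × ℝ × ℝ => |fx p.1 p.2.1 p.2.2|)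
        (Filter.Eventually.of_forall fun p => abs_nonneg _)
        (Filter.Eventually.of_forall fun p => abs_nonneg _)
        hi1 hi2 hi3
      have h10 : (∫ p : ℝ × ℝ × ℝ, |f p.1 p.2.1 p.2.2| ^ 2 ∂Pi3) = l2sq L₁ L₂ f := by
        have e : (∫ p : ℝ × ℝ × ℝ, |f p.1 p.2.1 p.2.2| ^ 2 ∂Pi3)
            = ∫ p : ℝ × ℝ × ℝ, (f p.1 p.2.1 p.2.2) ^ 2 ∂Pi3 := by
          apply integral_congr_ae
          apply Filter.Eventually.of_forall
          intro p
          show |f p.1 p.2.1 p.2.2| ^ 2 = (f p.1 p.2.1 p.2.2) ^ 2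
          rw [sq_abs]
        rw [e, hPi3, ← iter3 (u := fun x y z => (f x y z)^2) (by exact cf.pow 2) 0 L₁ 0 L₂ (-1) 1]
        simp only [l2sq]
      have h11 : Real.sqrt (∫ p : ℝ × ℝ × ℝ, |fx p.1 p.2.1 p.2.2| ^ 2 ∂Pi3)
          ≤ gradHnorm L₁ L₂ fx fy := by
        rw [gradHnorm]
        apply Real.sqrt_le_sqrt
        have hmono : (∫ p : ℝ × ℝ × ℝ, |fx p.1 p.2.1 p.2.2| ^ 2 ∂Pi3)
            ≤ ∫ p : ℝ × ℝ × ℝ, ((fx p.1 p.2.1 p.2.2) ^ 2 + (fy p.1 p.2.1 p.2.2) ^ 2) ∂Pi3 := by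
          apply integral_mono
          · rw [hPi3]
            exact intProd3 (u := fun p : ℝ × (ℝ × ℝ) => |fx p.1 p.2.1 p.2.2| ^ 2)
              (cfx.abs.pow 2) 0 L₁ 0 L₂ (-1) 1
          · rw [hPi3]
            exact intProd3 (u := fun p : ℝ × (ℝ × ℝ) =>
              (fx p.1 p.2.1 p.2.2) ^ 2 + (fy p.1 p.2.1 p.2.2) ^ 2)
              ((cfx.pow 2).add (cfy.pow 2)) 0 L₁ 0 L₂ (-1) 1
          · intro p
            show |fx p.1 p.2.1 p.2.2| ^ 2 ≤ _
            rw [sq_abs]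
            exact le_add_of_nonneg_right (sq_nonneg _)
        refine hmono.trans (le_of_eq ?_)
        rw [hPi3]
        exact (iter3 (u := fun x y z => (fx x y z)^2 + (fy x y z)^2)
          (by exact (cfx.pow 2).add (cfy.pow 2)) 0 L₁ 0 L₂ (-1) 1).symm
      calc (∫ y in Ioo (0:ℝ) L₂, Df y)
          = 2 * ∫ p : ℝ × ℝ × ℝ, |f p.1 p.2.1 p.2.2| * |fx p.1 p.2.1 p.2.2| ∂Pi3 := by
            rw [hswapDf, hiter3, h8]
        _ ≤ 2 * (Real.sqrt (∫ p : ℝ × ℝ × ℝ, |f p.1 p.2.1 p.2.2| ^ 2 ∂Pi3)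
              * Real.sqrt (∫ p : ℝ × ℝ × ℝ, |fx p.1 p.2.1 p.2.2| ^ 2 ∂Pi3)) := by
            exact mul_le_mul_of_nonneg_left hcs3 (by norm_num)
        _ ≤ 2 * (l2norm L₁ L₂ f * gradHnorm L₁ L₂ fx fy) := by
            apply mul_le_mul_of_nonneg_left _ (by norm_num : (0:ℝ) ≤ 2)
            rw [h10]
            have : Real.sqrt (l2sq L₁ L₂ f) = l2norm L₁ L₂ f := by rw [l2norm]
            rw [this]
            apply mul_le_mul_of_nonneg_left h11
            rw [← this]
            exact Real.sqrt_nonneg _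
    rw [hsplit, hD1]
    linarith [hD2]
  -- Step E : bound SQ
  have stepE : SQ ≤ (1/L₂) * l2sq L₁ L₂ g
      + 2 * (l2norm L₁ L₂ g * gradHnorm L₁ L₂ gx gy) := by
    have hsplit : SQ = (1/L₂) * (∫ x in Ioo (0:ℝ) L₁, ∫ t in Ioo (0:ℝ) L₂, V x t)
        + ∫ x in Ioo (0:ℝ) L₁, Dg x := by
      rw [hSQ]
      simp only [hQ]
      rw [integral_add ((intOn (contInt (u := fun x t => V x t) cV2 0 L₂) 0 L₁).const_mul _)
        (intOn cDg 0 L₁)]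
      rw [integral_const_mul]
    have hE1 : (∫ x in Ioo (0:ℝ) L₁, ∫ t in Ioo (0:ℝ) L₂, V x t) = l2sq L₁ L₂ g := by
      simp only [hV, l2sq]
    have hE2 : (∫ x in Ioo (0:ℝ) L₁, Dg x)
        ≤ 2 * (l2norm L₁ L₂ g * gradHnorm L₁ L₂ gx gy) := by
      have hiter3 : (∫ x in Ioo (0:ℝ) L₁, Dg x)
          = ∫ p : ℝ × ℝ × ℝ, 2 * |g p.1 p.2.1 p.2.2| * |gy p.1 p.2.1 p.2.2| ∂Pi3 := by
        simp only [hDg]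
        rw [hPi3]
        exact iter3 (u := fun x y z => 2 * |g x y z| * |gy x y z|)
          (by exact (continuous_const.mul cg.abs).mul cgy.abs) 0 L₁ 0 L₂ (-1) 1
      have h8 : (∫ p : ℝ × ℝ × ℝ, 2 * |g p.1 p.2.1 p.2.2| * |gy p.1 p.2.1 p.2.2| ∂Pi3)
          = 2 * ∫ p : ℝ × ℝ × ℝ, |g p.1 p.2.1 p.2.2| * |gy p.1 p.2.1 p.2.2| ∂Pi3 := by
        simp_rw [mul_assoc]
        rw [integral_const_mul]
      have hi1 : Integrable (fun p : ℝ × ℝ × ℝ => |g p.1 p.2.1 p.2.2| ^ 2) Pi3 := by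
        rw [hPi3]
        exact intProd3 (u := fun p : ℝ × (ℝ × ℝ) => |g p.1 p.2.1 p.2.2| ^ 2)
          (cg.abs.pow 2) 0 L₁ 0 L₂ (-1) 1
      have hi2 : Integrable (fun p : ℝ × ℝ × ℝ => |gy p.1 p.2.1 p.2.2| ^ 2) Pi3 := by
        rw [hPi3]
        exact intProd3 (u := fun p : ℝ × (ℝ × ℝ) => |gy p.1 p.2.1 p.2.2| ^ 2)
          (cgy.abs.pow 2) 0 L₁ 0 L₂ (-1) 1
      have hi3 : Integrable (fun p : ℝ × ℝ × ℝ => |g p.1 p.2.1 p.2.2| * |gy p.1 p.2.1 p.2.2|) Pi3 := by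
        rw [hPi3]
        exact intProd3 (u := fun p : ℝ × (ℝ × ℝ) => |g p.1 p.2.1 p.2.2| * |gy p.1 p.2.1 p.2.2|)
          (cg.abs.mul cgy.abs) 0 L₁ 0 L₂ (-1) 1
      have hcs3 := cs_integral (μ := Pi3)
        (u := fun p : ℝ × ℝ × ℝ => |g p.1 p.2.1 p.2.2|)
        (v := fun p : ℝ × ℝ × ℝ => |gy p.1 p.2.1 p.2.2|)
        (Filter.Eventually.of_forall fun p => abs_nonneg _)
        (Filter.Eventually.of_forall fun p => abs_nonneg _)
        hi1 hi2 hi3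
      have h10 : (∫ p : ℝ × ℝ × ℝ, |g p.1 p.2.1 p.2.2| ^ 2 ∂Pi3) = l2sq L₁ L₂ g := by
        have e : (∫ p : ℝ × ℝ × ℝ, |g p.1 p.2.1 p.2.2| ^ 2 ∂Pi3)
            = ∫ p : ℝ × ℝ × ℝ, (g p.1 p.2.1 p.2.2) ^ 2 ∂Pi3 := by
          apply integral_congr_ae
          apply Filter.Eventually.of_forall
          intro p
          show |g p.1 p.2.1 p.2.2| ^ 2 = (g p.1 p.2.1 p.2.2) ^ 2
          rw [sq_abs]
        rw [e, hPi3, ← iter3 (u := fun x y z => (g x y z)^2) (by exact cg.pow 2) 0 L₁ 0 L₂ (-1) 1]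
        simp only [l2sq]
      have h11 : Real.sqrt (∫ p : ℝ × ℝ × ℝ, |gy p.1 p.2.1 p.2.2| ^ 2 ∂Pi3)
          ≤ gradHnorm L₁ L₂ gx gy := by
        rw [gradHnorm]
        apply Real.sqrt_le_sqrt
        have hmono : (∫ p : ℝ × ℝ × ℝ, |gy p.1 p.2.1 p.2.2| ^ 2 ∂Pi3)
            ≤ ∫ p : ℝ × ℝ × ℝ, ((gx p.1 p.2.1 p.2.2) ^ 2 + (gy p.1 p.2.1 p.2.2) ^ 2) ∂Pi3 := by
          apply integral_mono
          · rw [hPi3]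
            exact intProd3 (u := fun p : ℝ × (ℝ × ℝ) => |gy p.1 p.2.1 p.2.2| ^ 2)
              (cgy.abs.pow 2) 0 L₁ 0 L₂ (-1) 1
          · rw [hPi3]
            exact intProd3 (u := fun p : ℝ × (ℝ × ℝ) =>
              (gx p.1 p.2.1 p.2.2) ^ 2 + (gy p.1 p.2.1 p.2.2) ^ 2)
              ((cgx.pow 2).add (cgy.pow 2)) 0 L₁ 0 L₂ (-1) 1
          · intro p
            show |gy p.1 p.2.1 p.2.2| ^ 2 ≤ _
            rw [sq_abs]
            exact le_add_of_nonneg_left (sq_nonneg _)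
        refine hmono.trans (le_of_eq ?_)
        rw [hPi3]
        exact (iter3 (u := fun x y z => (gx x y z)^2 + (gy x y z)^2)
          (by exact (cgx.pow 2).add (cgy.pow 2)) 0 L₁ 0 L₂ (-1) 1).symm
      calc (∫ x in Ioo (0:ℝ) L₁, Dg x)
          = 2 * ∫ p : ℝ × ℝ × ℝ, |g p.1 p.2.1 p.2.2| * |gy p.1 p.2.1 p.2.2| ∂Pi3 := by
            rw [hiter3, h8]
        _ ≤ 2 * (Real.sqrt (∫ p : ℝ × ℝ × ℝ, |g p.1 p.2.1 p.2.2| ^ 2 ∂Pi3)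
              * Real.sqrt (∫ p : ℝ × ℝ × ℝ, |gy p.1 p.2.1 p.2.2| ^ 2 ∂Pi3)) := by
            exact mul_le_mul_of_nonneg_left hcs3 (by norm_num)
        _ ≤ 2 * (l2norm L₁ L₂ g * gradHnorm L₁ L₂ gx gy) := by
            apply mul_le_mul_of_nonneg_left _ (by norm_num : (0:ℝ) ≤ 2)
            rw [h10]
            have hln : Real.sqrt (l2sq L₁ L₂ g) = l2norm L₁ L₂ g := by rw [l2norm]
            rw [hln]
            apply mul_le_mul_of_nonneg_left h11
            rw [← hln]
            exact Real.sqrt_nonneg _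
    rw [hsplit, hE1]
    linarith [hE2]
  -- Step F : final arithmetic
  have hNf0 : 0 ≤ l2norm L₁ L₂ f := by rw [l2norm]; exact Real.sqrt_nonneg _
  have hNg0 : 0 ≤ l2norm L₁ L₂ g := by rw [l2norm]; exact Real.sqrt_nonneg _
  have hNh0 : 0 ≤ l2norm L₁ L₂ h := by rw [l2norm]; exact Real.sqrt_nonneg _
  have hMf0 : 0 ≤ gradHnorm L₁ L₂ fx fy := by rw [gradHnorm]; exact Real.sqrt_nonneg _
  have hMg0 : 0 ≤ gradHnorm L₁ L₂ gx gy := by rw [gradHnorm]; exact Real.sqrt_nonneg _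
  have hsqf0 : 0 ≤ l2sq L₁ L₂ f := by
    rw [l2sq]
    exact integral_nonneg fun x => integral_nonneg fun y => integral_nonneg fun z => sq_nonneg _
  have hsqg0 : 0 ≤ l2sq L₁ L₂ g := by
    rw [l2sq]
    exact integral_nonneg fun x => integral_nonneg fun y => integral_nonneg fun z => sq_nonneg _
  have hFf : Real.sqrt SP ≤ c₁ * (Real.sqrt (l2norm L₁ L₂ f)
      * (Real.sqrt (l2norm L₁ L₂ f) + Real.sqrt (gradHnorm L₁ L₂ fx fy))) := by
    calc Real.sqrt SP
        ≤ Real.sqrt ((1/L₁) * l2sq L₁ L₂ f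
            + 2 * (l2norm L₁ L₂ f * gradHnorm L₁ L₂ fx fy)) := Real.sqrt_le_sqrt stepD
      _ ≤ Real.sqrt ((1/L₁) * l2sq L₁ L₂ f)
            + Real.sqrt (2 * (l2norm L₁ L₂ f * gradHnorm L₁ L₂ fx fy)) :=
          sqrt_add_le (by positivity) (by positivity)
      _ = Real.sqrt (1/L₁) * l2norm L₁ L₂ f
            + Real.sqrt 2 * (Real.sqrt (l2norm L₁ L₂ f) * Real.sqrt (gradHnorm L₁ L₂ fx fy)) := by
          rw [Real.sqrt_mul (by positivity : (0:ℝ) ≤ 1/L₁),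
            Real.sqrt_mul (by norm_num : (0:ℝ) ≤ 2), Real.sqrt_mul hNf0, l2norm]
      _ ≤ c₁ * (Real.sqrt (l2norm L₁ L₂ f)
            * (Real.sqrt (l2norm L₁ L₂ f) + Real.sqrt (gradHnorm L₁ L₂ fx fy))) := by
          have hself : Real.sqrt (l2norm L₁ L₂ f) * Real.sqrt (l2norm L₁ L₂ f)
              = l2norm L₁ L₂ f := Real.mul_self_sqrt hNf0
          rw [hc₁]
          nlinarith [Real.sqrt_nonneg (1/L₁), Real.sqrt_nonneg 2,
            Real.sqrt_nonneg (l2norm L₁ L₂ f), Real.sqrt_nonneg (gradHnorm L₁ L₂ fx fy),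
            mul_nonneg (Real.sqrt_nonneg (1/L₁))
              (mul_nonneg (Real.sqrt_nonneg (l2norm L₁ L₂ f))
                (Real.sqrt_nonneg (gradHnorm L₁ L₂ fx fy))),
            mul_nonneg (Real.sqrt_nonneg 2) hNf0]
  have hFg : Real.sqrt SQ ≤ c₂ * (Real.sqrt (l2norm L₁ L₂ g)
      * (Real.sqrt (l2norm L₁ L₂ g) + Real.sqrt (gradHnorm L₁ L₂ gx gy))) := by
    calc Real.sqrt SQ
        ≤ Real.sqrt ((1/L₂) * l2sq L₁ L₂ g
            + 2 * (l2norm L₁ L₂ g * gradHnorm L₁ L₂ gx gy)) := Real.sqrt_le_sqrt stepE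
      _ ≤ Real.sqrt ((1/L₂) * l2sq L₁ L₂ g)
            + Real.sqrt (2 * (l2norm L₁ L₂ g * gradHnorm L₁ L₂ gx gy)) :=
          sqrt_add_le (by positivity) (by positivity)
      _ = Real.sqrt (1/L₂) * l2norm L₁ L₂ g
            + Real.sqrt 2 * (Real.sqrt (l2norm L₁ L₂ g) * Real.sqrt (gradHnorm L₁ L₂ gx gy)) := by
          rw [Real.sqrt_mul (by positivity : (0:ℝ) ≤ 1/L₂),
            Real.sqrt_mul (by norm_num : (0:ℝ) ≤ 2), Real.sqrt_mul hNg0, l2norm]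
      _ ≤ c₂ * (Real.sqrt (l2norm L₁ L₂ g)
            * (Real.sqrt (l2norm L₁ L₂ g) + Real.sqrt (gradHnorm L₁ L₂ gx gy))) := by
          have hself : Real.sqrt (l2norm L₁ L₂ g) * Real.sqrt (l2norm L₁ L₂ g)
              = l2norm L₁ L₂ g := Real.mul_self_sqrt hNg0
          rw [hc₂]
          nlinarith [Real.sqrt_nonneg (1/L₂), Real.sqrt_nonneg 2,
            Real.sqrt_nonneg (l2norm L₁ L₂ g), Real.sqrt_nonneg (gradHnorm L₁ L₂ gx gy),
            mul_nonneg (Real.sqrt_nonneg (1/L₂))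
              (mul_nonneg (Real.sqrt_nonneg (l2norm L₁ L₂ g))
                (Real.sqrt_nonneg (gradHnorm L₁ L₂ gx gy))),
            mul_nonneg (Real.sqrt_nonneg 2) hNg0]
  calc (∫ x in Ioo (0:ℝ) L₁, ∫ y in Ioo (0:ℝ) L₂,
        (∫ z in Ioo (-1:ℝ) 1, |f x y z|) * (∫ z in Ioo (-1:ℝ) 1, |g x y z * h x y z|))
      ≤ ∫ x in Ioo (0:ℝ) L₁, ∫ y in Ioo (0:ℝ) L₂,
          Real.sqrt 2 * ((Real.sqrt (P y) * Real.sqrt (Q x)) * Real.sqrt (Hh x y)) := stepB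
    _ ≤ Real.sqrt 2 * ((Real.sqrt SP * Real.sqrt SQ) * l2norm L₁ L₂ h) := stepC
    _ ≤ Real.sqrt 2 * (((c₁ * (Real.sqrt (l2norm L₁ L₂ f)
          * (Real.sqrt (l2norm L₁ L₂ f) + Real.sqrt (gradHnorm L₁ L₂ fx fy))))
        * (c₂ * (Real.sqrt (l2norm L₁ L₂ g)
          * (Real.sqrt (l2norm L₁ L₂ g) + Real.sqrt (gradHnorm L₁ L₂ gx gy)))))
        * l2norm L₁ L₂ h) := by
        apply mul_le_mul_of_nonneg_left _ (Real.sqrt_nonneg 2)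
        apply mul_le_mul_of_nonneg_right _ hNh0
        apply mul_le_mul hFf hFg (Real.sqrt_nonneg SQ)
        exact mul_nonneg hc₁0.le (by positivity)
    _ = Real.sqrt 2 * c₁ * c₂ * Real.sqrt (l2norm L₁ L₂ f)
        * (Real.sqrt (l2norm L₁ L₂ f) + Real.sqrt (gradHnorm L₁ L₂ fx fy))
        * l2norm L₁ L₂ h * Real.sqrt (l2norm L₁ L₂ g)
        * (Real.sqrt (l2norm L₁ L₂ g) + Real.sqrt (gradHnorm L₁ L₂ gx gy)) := by ring
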